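/- The 37 triangular lattice points of a regular hexagon of side length 3 form a 15-distance set: the set of squared pairwise distances is exactly {1, 3, 4, 7, 9, 12, 13, 16, 19, 21, 25, 27, 28, 31, 36}, which equals the 15 smallest positive Löschian numbers. -/

import Mathlib

/-- Triangular lattice point a•(1,0) + b•(1/2, √3/2). -/
noncomputable def tri (a b : ℤ) : ℝ × ℝ :=
  ((a : ℝ) + (b : ℝ) / 2, (b : ℝ) * Real.sqrt 3 / 2)

/-- Squared Euclidean distance in the plane. -/
def sqd (p q : ℝ × ℝ) : ℝ := (p.1 - q.1) ^ 2 + (p.2 - q.2) ^ 2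

/-- The triangular lattice. -/
noncomputable def triLattice : Set (ℝ × ℝ) := {p | ∃ a b : ℤ, p = tri a b}

/-- Closed regular hexagon of side `k` centered at the origin with a vertex at `(k,0)`. -/
noncomputable def hexR (k : ℤ) : Set (ℝ × ℝ) :=
  convexHull ℝ ({tri k 0, tri 0 k, tri (-k) k, tri (-k) 0, tri 0 (-k), tri k (-k)} : Set (ℝ × ℝ))

/-- Closed (k, k+1)-equiangular hexagon with vertices at lattice points. -/
noncomputable def hexE (k : ℤ) : Set (ℝ × ℝ) :=
  convexHull ℝ ({tri k 0, tri k (k+1), tri 0 (2*k+1), tri (-(k+1)) (2*k+1),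
    tri (-(k+1)) (k+1), tri 0 0} : Set (ℝ × ℝ))

/-- Set of squared distances between distinct points of `X`. -/
def sqdSet (X : Set (ℝ × ℝ)) : Set ℝ := {d | ∃ p ∈ X, ∃ q ∈ X, p ≠ q ∧ d = sqd p q}

/-! In the coordinates `(a, b)` of the basis `(1, 0)`, `(1/2, √3/2)` the hexagon `hexR k` is the
polygon `|a|, |b|, |a + b| ≤ k`, and the squared distance between two lattice points is the
Löschian form `a² + ab + b²` of their difference. The 37 lattice points and their 15 squared
distances are then a finite computation, and so are the Löschian numbers up to `36`, since
`4 (a² + ab + b²) = (2a + b)² + 3b²` confines them to `|a|, |b| ≤ 6`. -/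

open Set

noncomputable def triLinear : ℝ × ℝ →ₗ[ℝ] ℝ × ℝ where
  toFun v := (v.1 + v.2 / 2, v.2 * √3 / 2)
  map_add' v w := by ext <;> simp only [Prod.fst_add, Prod.snd_add] <;> ring
  map_smul' c v := by
    ext <;> simp only [Prod.smul_fst, Prod.smul_snd, smul_eq_mul, RingHom.id_apply] <;> ring

theorem triLinear_intCast (a b : ℤ) : triLinear ((a : ℝ), (b : ℝ)) = tri a b := rfl

theorem triLinear_injective : Function.Injective triLinear := by
  intro v w h
  simp only [triLinear, LinearMap.coe_mk, AddHom.coe_mk, Prod.mk.injEq] at h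
  have h₂ : v.2 = w.2 := by
    have h₂ := h.2
    field_simp at h₂
    exact h₂
  exact Prod.ext (by linarith [h.1]) h₂

theorem tri_injective : Function.Injective (Function.uncurry tri) := by
  rintro ⟨a, b⟩ ⟨c, d⟩ h
  have := triLinear_injective
    (show triLinear ((a : ℝ), (b : ℝ)) = triLinear ((c : ℝ), (d : ℝ)) from h)
  simp only [Prod.mk.injEq, Int.cast_inj] at this
  rw [this.1, this.2]

def loschianForm (v : ℤ × ℤ) : ℤ := v.1 ^ 2 + v.1 * v.2 + v.2 ^ 2

theorem four_mul_loschianForm (v : ℤ × ℤ) :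
    4 * loschianForm v = (2 * v.1 + v.2) ^ 2 + 3 * v.2 ^ 2 := by
  unfold loschianForm
  ring

theorem loschianForm_swap (v : ℤ × ℤ) : loschianForm v.swap = loschianForm v := by
  simp only [loschianForm, Prod.fst_swap, Prod.snd_swap]
  ring

theorem sqd_tri (v w : ℤ × ℤ) :
    sqd (Function.uncurry tri v) (Function.uncurry tri w) = loschianForm (v - w) := by
  have h3 : √3 ^ 2 = 3 := Real.sq_sqrt (by norm_num)
  simp only [Function.uncurry, tri, sqd, loschianForm, Prod.fst_sub, Prod.snd_sub]
  push_cast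
  linear_combination (v.2 - w.2) ^ 2 / 4 * h3

def coordHexagon (k : ℝ) : Set (ℝ × ℝ) :=
  {v | |v.1| ≤ k ∧ |v.2| ≤ k ∧ |v.1 + v.2| ≤ k}

def hexagonVertices (k : ℝ) : Set (ℝ × ℝ) :=
  {(k, 0), (0, k), (-k, k), (-k, 0), (0, -k), (k, -k)}

theorem abs_convex_combo_le {x y s t k : ℝ} (hx : |x| ≤ k) (hy : |y| ≤ k) (hs : 0 ≤ s)
    (ht : 0 ≤ t) (hst : s + t = 1) : |s * x + t * y| ≤ k :=
  calc |s * x + t * y| ≤ s * |x| + t * |y| := by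
        simpa [abs_mul, abs_of_nonneg hs, abs_of_nonneg ht] using abs_add_le (s * x) (t * y)
    _ ≤ s * k + t * k := by gcongr
    _ = k := by rw [← add_mul, hst, one_mul]

theorem convex_coordHexagon (k : ℝ) : Convex ℝ (coordHexagon k) := by
  rintro v ⟨hv₁, hv₂, hv₃⟩ w ⟨hw₁, hw₂, hw₃⟩ s t hs ht hst
  refine ⟨abs_convex_combo_le hv₁ hw₁ hs ht hst, abs_convex_combo_le hv₂ hw₂ hs ht hst,
    ?_⟩
  simpa [mul_add, add_add_add_comm] using abs_convex_combo_le hv₃ hw₃ hs ht hst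

theorem neg_hexagonVertices_subset (k : ℝ) : -hexagonVertices k ⊆ hexagonVertices k := by
  intro v hv
  simp only [hexagonVertices, mem_neg, mem_insert_iff, mem_singleton_iff, Prod.ext_iff,
    Prod.fst_neg, Prod.snd_neg, neg_eq_iff_eq_neg, neg_zero, neg_neg] at hv ⊢
  tauto

theorem neg_mem_coordHexagon {k : ℝ} {v : ℝ × ℝ} (hv : v ∈ coordHexagon k) :
    -v ∈ coordHexagon k := by
  obtain ⟨h₁, h₂, h₃⟩ := hv
  exact ⟨by rwa [Prod.fst_neg, abs_neg], by rwa [Prod.snd_neg, abs_neg],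
    by rwa [Prod.fst_neg, Prod.snd_neg, ← neg_add, abs_neg]⟩

theorem mem_convexHull_hexagonVertices_of_nonneg {k : ℝ} (hk : 0 < k) {v : ℝ × ℝ}
    (hv : v ∈ coordHexagon k) (hv₂ : 0 ≤ v.2) : v ∈ convexHull ℝ (hexagonVertices k) := by
  obtain ⟨a, b⟩ := v
  obtain ⟨ha, hb, hab⟩ := hv
  rw [abs_le] at ha hb hab
  dsimp only at ha hb hab hv₂
  -- `(a, b)` lies on the horizontal chord from `(-k, b)` on the left edge to `(k - b, b)` on the
  -- right edge.
  have hhull := convex_convexHull ℝ (hexagonVertices k)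
  have vertex : ∀ w ∈ hexagonVertices k, w ∈ convexHull ℝ (hexagonVertices k) :=
    subset_convexHull ℝ _
  have hbk : b / k ∈ Icc (0 : ℝ) 1 := ⟨by positivity, div_le_one_of_le₀ hb.2 hk.le⟩
  have hL : ((-k, b) : ℝ × ℝ) ∈ convexHull ℝ (hexagonVertices k) := by
    convert hhull.add_smul_sub_mem (vertex (-k, 0) (by simp [hexagonVertices]))
      (vertex (-k, k) (by simp [hexagonVertices])) hbk using 1
    ext <;> simp [div_mul_cancel₀ b hk.ne']
  have hR : ((k - b, b) : ℝ × ℝ) ∈ convexHull ℝ (hexagonVertices k) := by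
    convert hhull.add_smul_sub_mem (vertex (k, 0) (by simp [hexagonVertices]))
      (vertex (0, k) (by simp [hexagonVertices])) hbk using 1
    ext <;> simp [div_mul_cancel₀ b hk.ne', sub_eq_add_neg]
  have ht : (a + k) / (2 * k - b) ∈ Icc (0 : ℝ) 1 :=
    ⟨div_nonneg (by linarith) (by linarith), div_le_one_of_le₀ (by linarith) (by linarith)⟩
  convert hhull.add_smul_sub_mem hL hR ht using 1
  have hden : 2 * k - b ≠ 0 := by linarith
  ext
  · simp only [Prod.fst_add, Prod.smul_fst, Prod.fst_sub, smul_eq_mul]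
    rw [show k - b - -k = 2 * k - b by ring, div_mul_cancel₀ _ hden]
    ring
  · simp

theorem convexHull_hexagonVertices {k : ℝ} (hk : 0 < k) :
    convexHull ℝ (hexagonVertices k) = coordHexagon k := by
  refine (convexHull_min ?_ (convex_coordHexagon k)).antisymm fun v hv => ?_
  · rintro v (rfl | rfl | rfl | rfl | rfl | rfl) <;> simp [coordHexagon, abs_of_pos hk, hk.le]
  rcases le_total 0 v.2 with hv₂ | hv₂
  · exact mem_convexHull_hexagonVertices_of_nonneg hk hv hv₂
  · have hneg : -v ∈ convexHull ℝ (hexagonVertices k) :=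
      mem_convexHull_hexagonVertices_of_nonneg hk (neg_mem_coordHexagon hv) (by simpa using hv₂)
    refine convexHull_mono (neg_hexagonVertices_subset k) ?_
    rw [convexHull_neg]
    exact hneg

theorem hexR_eq_image (k : ℤ) : hexR k = triLinear '' convexHull ℝ (hexagonVertices k) := by
  rw [LinearMap.image_convexHull]
  simp only [hexR, hexagonVertices, image_insert_eq, image_singleton, ← triLinear_intCast]
  push_cast
  rfl

theorem tri_mem_hexR_iff {k : ℤ} (hk : 0 < k) (a b : ℤ) :
    tri a b ∈ hexR k ↔ |a| ≤ k ∧ |b| ≤ k ∧ |a + b| ≤ k := by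
  rw [hexR_eq_image, convexHull_hexagonVertices (by exact_mod_cast hk), ← triLinear_intCast,
    triLinear_injective.mem_set_image]
  simp only [coordHexagon, mem_ofPred_eq]
  norm_cast

-- `noncomputable` only because of the order instance Mathlib picks on `ℤ`; `decide` still
-- evaluates it in the kernel.
noncomputable def hexPoints (k : ℤ) : Finset (ℤ × ℤ) :=
  (Finset.Icc (-k) k ×ˢ Finset.Icc (-k) k).filter fun v => |v.1 + v.2| ≤ k

theorem triLattice_inter_hexR {k : ℤ} (hk : 0 < k) :
    triLattice ∩ hexR k = Function.uncurry tri '' hexPoints k := by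
  ext p
  simp only [triLattice, hexPoints, mem_inter_iff, mem_ofPred_eq, Finset.coe_filter,
    Finset.mem_product, Finset.mem_Icc, mem_image, Prod.exists, Function.uncurry_apply_pair]
  constructor
  · rintro ⟨⟨a, b, rfl⟩, h⟩
    rw [tri_mem_hexR_iff hk, abs_le, abs_le] at h
    exact ⟨a, b, ⟨⟨h.1, h.2.1⟩, h.2.2⟩, rfl⟩
  · rintro ⟨a, b, ⟨⟨ha, hb⟩, hab⟩, rfl⟩
    exact ⟨⟨a, b, rfl⟩, (tri_mem_hexR_iff hk a b).2 ⟨abs_le.2 ha, abs_le.2 hb, hab⟩⟩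

theorem sqdSet_image_tri (S : Finset (ℤ × ℤ)) :
    sqdSet (Function.uncurry tri '' S) =
      Int.cast '' (S.offDiag.image fun pq => loschianForm (pq.1 - pq.2) : Set ℤ) := by
  ext x
  constructor
  · rintro ⟨_, ⟨v, hv, rfl⟩, _, ⟨w, hw, rfl⟩, hne, rfl⟩
    refine ⟨loschianForm (v - w), ?_, (sqd_tri v w).symm⟩
    have hvw : (v, w) ∈ S.offDiag := Finset.mem_offDiag.2 ⟨hv, hw, ne_of_apply_ne _ hne⟩
    exact Finset.mem_coe.2 (Finset.mem_image_of_mem _ hvw)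
  · rintro ⟨_, hn, rfl⟩
    obtain ⟨⟨v, w⟩, hvw, rfl⟩ := Finset.mem_image.1 hn
    obtain ⟨hv, hw, hne⟩ := Finset.mem_offDiag.1 hvw
    exact ⟨_, mem_image_of_mem _ hv, _, mem_image_of_mem _ hw, tri_injective.ne hne,
      (sqd_tri v w).symm⟩

theorem card_hexPoints_three : (hexPoints 3).card = 37 := by decide

set_option maxRecDepth 10000 in
theorem image_loschianForm_sub_offDiag_hexPoints_three :
    (hexPoints 3).offDiag.image (fun pq => loschianForm (pq.1 - pq.2)) =
      {1, 3, 4, 7, 9, 12, 13, 16, 19, 21, 25, 27, 28, 31, 36} := by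
  decide

theorem snd_mem_Icc_of_loschianForm_le {v : ℤ × ℤ} (hv : loschianForm v ≤ 36) :
    v.2 ∈ Finset.Icc (-6) 6 := by
  have h := four_mul_loschianForm v
  rw [Finset.mem_Icc]
  constructor <;> nlinarith [sq_nonneg (2 * v.1 + v.2)]

theorem mem_Icc_prod_Icc_of_loschianForm_le {v : ℤ × ℤ} (hv : loschianForm v ≤ 36) :
    v ∈ Finset.Icc (-6) 6 ×ˢ Finset.Icc (-6) 6 :=
  Finset.mem_product.2 ⟨snd_mem_Icc_of_loschianForm_le (v := v.swap) (by rwa [loschianForm_swap]),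
    snd_mem_Icc_of_loschianForm_le hv⟩

set_option maxRecDepth 10000 in
theorem image_loschianForm_Icc_filter_le_36 :
    ((Finset.Icc (-6 : ℤ) 6 ×ˢ Finset.Icc (-6 : ℤ) 6).image loschianForm).filter
      (fun n => 0 < n ∧ n ≤ 36) = {1, 3, 4, 7, 9, 12, 13, 16, 19, 21, 25, 27, 28, 31, 36} := by
  decide

theorem setOf_loschian_le_36 :
    {x : ℝ | (∃ a b : ℤ, x = ((a ^ 2 + a * b + b ^ 2 : ℤ) : ℝ)) ∧ 0 < x ∧ x ≤ 36} =
      Int.cast ''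
        (({1, 3, 4, 7, 9, 12, 13, 16, 19, 21, 25, 27, 28, 31, 36} : Finset ℤ) : Set ℤ) := by
  rw [← image_loschianForm_Icc_filter_le_36]
  ext x
  simp only [mem_ofPred_eq, mem_image, Finset.coe_filter, Finset.mem_image]
  constructor
  · rintro ⟨⟨a, b, rfl⟩, hpos, hle⟩
    have hle' : loschianForm (a, b) ≤ 36 := by exact_mod_cast hle
    exact ⟨loschianForm (a, b), ⟨⟨(a, b), mem_Icc_prod_Icc_of_loschianForm_le hle', rfl⟩,
      by exact_mod_cast hpos, hle'⟩, rfl⟩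
  · rintro ⟨_, ⟨⟨⟨a, b⟩, -, rfl⟩, hpos, hle⟩, rfl⟩
    exact ⟨⟨a, b, rfl⟩, by exact_mod_cast hpos, by exact_mod_cast hle⟩

theorem hexagon_side3_fifteen_distance :
    (triLattice ∩ hexR 3).ncard = 37 ∧
      sqdSet (triLattice ∩ hexR 3) =
        {1, 3, 4, 7, 9, 12, 13, 16, 19, 21, 25, 27, 28, 31, 36} ∧
      sqdSet (triLattice ∩ hexR 3) =
        {x : ℝ | (∃ a b : ℤ, x = ((a ^ 2 + a * b + b ^ 2 : ℤ) : ℝ)) ∧ 0 < x ∧ x ≤ 36} := by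
  have hX := triLattice_inter_hexR (k := 3) (by norm_num)
  have hcast :
      Int.cast '' (({1, 3, 4, 7, 9, 12, 13, 16, 19, 21, 25, 27, 28, 31, 36} : Finset ℤ) : Set ℤ) =
      ({1, 3, 4, 7, 9, 12, 13, 16, 19, 21, 25, 27, 28, 31, 36} : Set ℝ) := by
    push_cast [Finset.coe_insert, Finset.coe_singleton, image_insert_eq, image_singleton]
    rfl
  have hdist :
      sqdSet (triLattice ∩ hexR 3) = {1, 3, 4, 7, 9, 12, 13, 16, 19, 21, 25, 27, 28, 31, 36} := by
    rw [hX, sqdSet_image_tri, image_loschianForm_sub_offDiag_hexPoints_three, hcast]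
  refine ⟨?_, hdist, ?_⟩
  · rw [hX, ncard_image_of_injective _ tri_injective, ncard_coe_finset, card_hexPoints_three]
  · rw [hdist, setOf_loschian_le_36, hcast]
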